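/- arXiv:2106.01126 — 6 statements merged into one kernel-verified Lean document; each statement's English description precedes it below -/
import Mathlib

section
/- Let V be a finite-dimensional real inner product space. The matrix exponential, restricted to the space of symmetric endomorphisms of V, is a bijection onto the set of positive-definite symmetric endomorphisms of V. -/
/-!
If `S v = μ • v` then `exp S v = e^μ • v`. Conversely, for symmetric `S`, expanding `v` in an
orthonormal eigenbasis of `S` shows that `exp S v = e^μ • v` forces `S v = μ • v`, since the real
exponential is injective. So `exp S = exp T` makes `S` agree with `T` on an eigenbasis of `T`, and a
positive-definite `P` is the exponential of the operator acting by `log λᵢ` on its eigenvectors.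
Positivity of `exp S` comes from `exp S = A * A` with `A = exp (S / 2)` symmetric and invertible, so
that `⟪exp S x, x⟫ = ‖A x‖²`.
-/

open scoped RealInnerProductSpace
open NormedSpace

theorem ContinuousLinearMap.exp_apply_of_apply_eq_smul {𝕂 E : Type*} [RCLike 𝕂]
    [NormedAddCommGroup E] [NormedSpace 𝕂 E] [CompleteSpace E] {T : E →L[𝕂] E} {v : E} {μ : 𝕂}
    (h : T v = μ • v) : NormedSpace.exp T v = NormedSpace.exp μ • v := by
  have hpow (n : ℕ) : (T ^ n) v = μ ^ n • v := by
    induction n with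
    | zero => simp
    | succ n ih =>
      rw [pow_succ', mul_apply_eq_comp, ih, map_smul, h, smul_smul, pow_succ]
  have hT := (exp_series_hasSum_exp' (𝕂 := 𝕂) T).mapL (apply 𝕂 E v)
  have hμ := (exp_series_hasSum_exp' (𝕂 := 𝕂) μ).smul_const v
  simp only [apply_apply, smul_apply, hpow, smul_smul] at hT
  exact hT.unique hμ

section InnerProductSpace

variable {V : Type*} [NormedAddCommGroup V] [InnerProductSpace ℝ V]

section CompleteSpace

variable [CompleteSpace V]

theorem IsSelfAdjoint.inner_exp_apply_self_pos {S : V →L[ℝ] V}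
    (hS : IsSelfAdjoint S) {x : V} (hx : x ≠ 0) : 0 < ⟪NormedSpace.exp S x, x⟫ := by
  let : NormedAlgebra ℚ (V →L[ℝ] V) := .restrictScalars ℚ ℝ _
  set A := NormedSpace.exp ((2⁻¹ : ℝ) • S)
  have hSA : NormedSpace.exp S = A * A := by
    rw [← sq, ← exp_nsmul, two_nsmul, ← add_smul]
    norm_num
  have hA : IsSelfAdjoint A := ((IsSelfAdjoint.all _).smul hS).exp
  have hAx : A x ≠ 0 := fun h ↦ hx ((isUnit_exp ((2⁻¹ : ℝ) • S)).smul_eq_zero.mp h)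
  calc 0 < ⟪A x, A x⟫ := real_inner_self_pos.mpr hAx
    _ = ⟪A (A x), x⟫ := (hA.isSymmetric (A x) x).symm
    _ = ⟪NormedSpace.exp S x, x⟫ := by rw [hSA]; rfl

theorem IsSelfAdjoint.inner_apply_eq_mul_of_apply_eq_smul {T : V →L[ℝ] V}
    (hT : IsSelfAdjoint T) {b : V} {μ : ℝ} (hb : T b = μ • b) (v : V) :
    ⟪b, T v⟫ = μ * ⟪b, v⟫ := by
  simpa [hb, real_inner_smul_left] using (hT.isSymmetric b v).symm

theorem OrthonormalBasis.exists_isSelfAdjoint_apply_eq_smul {ι : Type*} [Fintype ι]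
    (b : OrthonormalBasis ι ℝ V) (c : ι → ℝ) :
    ∃ S : V →L[ℝ] V, IsSelfAdjoint S ∧ ∀ i, S (b i) = c i • b i := by
  classical
  refine ⟨∑ i, c i • InnerProductSpace.rankOne ℝ (b i) (b i), ?_, fun j ↦ ?_⟩
  · exact isSelfAdjoint_sum _ fun i _ ↦
      (IsSelfAdjoint.all _).smul (InnerProductSpace.isPositive_rankOne_self (b i)).isSelfAdjoint
  · simp [InnerProductSpace.rankOne_apply, b.inner_eq_ite]

end CompleteSpace

variable [FiniteDimensional ℝ V]

theorem IsSelfAdjoint.apply_eq_smul_of_exp_apply_eq_smul {S : V →L[ℝ] V} (hS : IsSelfAdjoint S)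
    {v : V} {μ : ℝ} (h : NormedSpace.exp S v = Real.exp μ • v) : S v = μ • v := by
  set b := hS.isSymmetric.eigenvectorBasis rfl
  set c := hS.isSymmetric.eigenvalues rfl
  refine InnerProductSpace.ext_inner_left_basis b.toBasis fun i ↦ ?_
  have hb : S (b i) = c i • b i := hS.isSymmetric.apply_eigenvectorBasis rfl i
  have hexp_b : NormedSpace.exp S (b i) = Real.exp (c i) • b i := by
    rw [ContinuousLinearMap.exp_apply_of_apply_eq_smul hb, Real.exp_eq_exp_ℝ]
  have hexp : Real.exp (c i) * ⟪b i, v⟫ = Real.exp μ * ⟪b i, v⟫ := by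
    rw [← hS.exp.inner_apply_eq_mul_of_apply_eq_smul hexp_b, h, real_inner_smul_right]
  rw [OrthonormalBasis.coe_toBasis, hS.inner_apply_eq_mul_of_apply_eq_smul hb,
    real_inner_smul_right]
  rcases mul_eq_mul_right_iff.mp hexp with hc | hc
  · rw [Real.exp_injective hc]
  · rw [hc, mul_zero, mul_zero]

theorem injOn_exp_isSelfAdjoint : Set.InjOn NormedSpace.exp {S : V →L[ℝ] V | IsSelfAdjoint S} := by
  intro S hS T hT hST
  set b := hT.isSymmetric.eigenvectorBasis rfl
  set c := hT.isSymmetric.eigenvalues rfl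
  have hTb (i) : T (b i) = c i • b i := hT.isSymmetric.apply_eigenvectorBasis rfl i
  have hSb (i) : S (b i) = c i • b i := by
    refine hS.apply_eq_smul_of_exp_apply_eq_smul ?_
    rw [hST, ContinuousLinearMap.exp_apply_of_apply_eq_smul (hTb i), Real.exp_eq_exp_ℝ]
  refine ContinuousLinearMap.coe_injective (b.toBasis.ext fun i ↦ ?_)
  simp [hSb, hTb]

theorem exists_isSelfAdjoint_exp_eq {P : V →L[ℝ] V} (hP : IsSelfAdjoint P)
    (hP_pos : ∀ x, x ≠ 0 → 0 < ⟪P x, x⟫) :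
    ∃ S : V →L[ℝ] V, IsSelfAdjoint S ∧ NormedSpace.exp S = P := by
  set b := hP.isSymmetric.eigenvectorBasis rfl
  set c := hP.isSymmetric.eigenvalues rfl
  have hPb (i) : P (b i) = c i • b i := hP.isSymmetric.apply_eigenvectorBasis rfl i
  have hc_pos (i) : 0 < c i := by
    simpa [hPb, real_inner_smul_left] using hP_pos (b i) (b.orthonormal.ne_zero i)
  obtain ⟨S, hS, hSb⟩ := b.exists_isSelfAdjoint_apply_eq_smul (Real.log ∘ c)
  refine ⟨S, hS, ContinuousLinearMap.coe_injective (b.toBasis.ext fun i ↦ ?_)⟩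
  simp [ContinuousLinearMap.exp_apply_of_apply_eq_smul (hSb i), ← Real.exp_eq_exp_ℝ,
    Real.exp_log (hc_pos i), hPb]

end InnerProductSpace

/-- The exponential of endomorphisms, restricted to symmetric endomorphisms of a
finite-dimensional real inner product space, is a bijection onto the
positive-definite symmetric endomorphisms. -/
theorem exp_bijOn_symmetric_posDef
    (V : Type*) [NormedAddCommGroup V] [InnerProductSpace ℝ V] [FiniteDimensional ℝ V] :
    Set.BijOn (NormedSpace.exp)
      {S : V →L[ℝ] V | ∀ x y : V, ⟪S x, y⟫ = ⟪x, S y⟫}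
      {S : V →L[ℝ] V | (∀ x y : V, ⟪S x, y⟫ = ⟪x, S y⟫) ∧
        ∀ x : V, x ≠ 0 → 0 < ⟪S x, x⟫} := by
  have hsymm (S : V →L[ℝ] V) : (∀ x y : V, ⟪S x, y⟫ = ⟪x, S y⟫) ↔ IsSelfAdjoint S :=
    ContinuousLinearMap.isSelfAdjoint_iff_isSymmetric.symm
  simp only [hsymm]
  refine ⟨fun S hS ↦ ⟨hS.exp, fun x hx ↦ hS.inner_exp_apply_self_pos hx⟩,
    injOn_exp_isSelfAdjoint, fun P ⟨hP, hP_pos⟩ ↦ exists_isSelfAdjoint_exp_eq hP hP_pos⟩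
end

section
/- Let E be a finite-dimensional real inner product space and P a positive-definite symmetric endomorphism of E. Then the Sylvester-type linear map L_P : S ↦ P S + S P, defined on the space of symmetric endomorphisms of E, is a linear bijection (in particular invertible). -/
open scoped RealInnerProductSpace

lemma trace_eq_sum_inner' {E : Type*} [NormedAddCommGroup E] [InnerProductSpace ℝ E]
    [FiniteDimensional ℝ E] {ι : Type*} [Fintype ι] [DecidableEq ι]
    (b : OrthonormalBasis ι ℝ E) (A : E →ₗ[ℝ] E) :
    LinearMap.trace ℝ E A = ∑ i, ⟪b i, A (b i)⟫ := by
  rw [LinearMap.trace_eq_matrix_trace ℝ b.toBasis A, Matrix.trace]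
  congr 1
  ext i
  rw [Matrix.diag_apply, LinearMap.toMatrix_apply, b.coe_toBasis,
    b.coe_toBasis_repr_apply, b.repr_apply_apply]

lemma sylvester_inj {E : Type*} [NormedAddCommGroup E] [InnerProductSpace ℝ E]
    [FiniteDimensional ℝ E] (P : E →ₗ[ℝ] E)
    (hPsymm : ∀ x y : E, ⟪P x, y⟫ = ⟪x, P y⟫)
    (hPpos : ∀ x : E, x ≠ 0 → 0 < ⟪P x, x⟫)
    (S : E →ₗ[ℝ] E) (hS : ∀ x y : E, ⟪S x, y⟫ = ⟪x, S y⟫)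
    (h : P ∘ₗ S + S ∘ₗ P = 0) : S = 0 := by
  have hPnn : ∀ x : E, 0 ≤ ⟪P x, x⟫ := by
    intro x
    by_cases hx : x = 0
    · simp [hx]
    · exact (hPpos x hx).le
  let b := stdOrthonormalBasis ℝ E
  -- pointwise: ⟪P (S x), S x⟫ + ⟪S (P x), S x⟫ = 0
  have hpt : ∀ x : E, ⟪P (S x), S x⟫ + ⟪S (P x), S x⟫ = 0 := by
    intro x
    have := congrArg (fun T : E →ₗ[ℝ] E => ⟪T x, S x⟫) h
    simpa [inner_add_left] using this
  -- sum identity via trace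
  have htr : ∑ i, ⟪S (P (b i)), S (b i)⟫ = ∑ i, ⟪P (S (b i)), S (b i)⟫ := by
    have h1 : ∑ i, ⟪S (P (b i)), S (b i)⟫ = LinearMap.trace ℝ E (S ∘ₗ S ∘ₗ P) := by
      rw [trace_eq_sum_inner' b]
      refine Finset.sum_congr rfl fun i _ => ?_
      rw [LinearMap.comp_apply, LinearMap.comp_apply, ← hS]
      exact real_inner_comm _ _
    have h2 : ∑ i, ⟪P (S (b i)), S (b i)⟫ = LinearMap.trace ℝ E (S ∘ₗ P ∘ₗ S) := by
      rw [trace_eq_sum_inner' b]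
      refine Finset.sum_congr rfl fun i _ => ?_
      rw [LinearMap.comp_apply, LinearMap.comp_apply, ← hS]
      exact real_inner_comm _ _
    rw [h1, h2]
    rw [← Module.End.mul_eq_comp, ← Module.End.mul_eq_comp, ← Module.End.mul_eq_comp,
      ← Module.End.mul_eq_comp]
    conv_lhs => rw [← mul_assoc, LinearMap.trace_mul_comm]
    conv_lhs => rw [← mul_assoc, LinearMap.trace_mul_comm]
  have hsum : ∑ i, ⟪P (S (b i)), S (b i)⟫ = 0 := by
    have h0 : ∑ i, (⟪P (S (b i)), S (b i)⟫ + ⟪S (P (b i)), S (b i)⟫) = 0 := by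
      simp [hpt]
    rw [Finset.sum_add_distrib, htr] at h0
    linarith
  have hzero : ∀ i, S (b i) = 0 := by
    intro i
    by_contra hne
    have hall : ∀ i ∈ Finset.univ, (0:ℝ) ≤ ⟪P (S (b i)), S (b i)⟫ := fun i _ => hPnn _
    have := (Finset.sum_eq_zero_iff_of_nonneg hall).1 hsum i (Finset.mem_univ i)
    exact absurd this (ne_of_gt (hPpos _ hne))
  apply b.toBasis.ext
  intro i
  simp [b.coe_toBasis, hzero i]

/-- For a positive-definite symmetric endomorphism `P` of a finite-dimensional real
inner product space, the Sylvester map `S ↦ P ∘ S + S ∘ P` is a bijection from the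
set of symmetric endomorphisms onto itself (it is linear by construction, hence a
linear bijection). -/
theorem sylvester_map_bijective
    (E : Type*) [NormedAddCommGroup E] [InnerProductSpace ℝ E] [FiniteDimensional ℝ E]
    (P : E →ₗ[ℝ] E)
    (hPsymm : ∀ x y : E, ⟪P x, y⟫ = ⟪x, P y⟫)
    (hPpos : ∀ x : E, x ≠ 0 → 0 < ⟪P x, x⟫) :
    Set.BijOn (fun S : E →ₗ[ℝ] E => P ∘ₗ S + S ∘ₗ P)
      {S : E →ₗ[ℝ] E | ∀ x y : E, ⟪S x, y⟫ = ⟪x, S y⟫}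
      {S : E →ₗ[ℝ] E | ∀ x y : E, ⟪S x, y⟫ = ⟪x, S y⟫} := by
  -- submodule of symmetric endomorphisms
  set W : Submodule ℝ (E →ₗ[ℝ] E) :=
    { carrier := {S : E →ₗ[ℝ] E | ∀ x y : E, ⟪S x, y⟫ = ⟪x, S y⟫}
      add_mem' := by
        intro a b ha hb x y
        simp [LinearMap.add_apply, inner_add_left, inner_add_right, ha x y, hb x y]
      zero_mem' := by intro x y; simp
      smul_mem' := by
        intro c a ha x y
        simp [LinearMap.smul_apply, inner_smul_left, inner_smul_right, ha x y] } with hW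
  have hmaps : ∀ S ∈ W, (P ∘ₗ S + S ∘ₗ P) ∈ W := by
    intro S hS x y
    simp only [LinearMap.add_apply, LinearMap.comp_apply, inner_add_left, inner_add_right]
    rw [hPsymm (S x) y, hS x (P y), hS (P x) y, hPsymm x (S y)]
    ring
  -- linear map on W
  let f : W →ₗ[ℝ] W :=
    { toFun := fun S => ⟨P ∘ₗ S.1 + S.1 ∘ₗ P, hmaps S.1 S.2⟩
      map_add' := by
        intro a b
        ext x
        simp [LinearMap.add_comp, LinearMap.comp_add]
        abel
      map_smul' := by
        intro c a
        ext x
        simp [LinearMap.smul_comp, LinearMap.comp_smul] }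
  have hinj : Function.Injective f := by
    rw [← LinearMap.ker_eq_bot, LinearMap.ker_eq_bot']
    intro S hS0
    have h0 : P ∘ₗ S.1 + S.1 ∘ₗ P = 0 := congrArg Subtype.val hS0
    exact Subtype.ext (sylvester_inj P hPsymm hPpos S.1 S.2 h0)
  have hsurj : Function.Surjective f := LinearMap.injective_iff_surjective.mp hinj
  refine ⟨fun S hS => hmaps S hS, ?_, ?_⟩
  · intro S hS T hT hST
    have : f ⟨S, hS⟩ = f ⟨T, hT⟩ := Subtype.ext hST
    exact congrArg Subtype.val (hinj this)
  · intro T hT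
    obtain ⟨S, hfS⟩ := hsurj ⟨T, hT⟩
    exact ⟨S.1, S.2, congrArg Subtype.val hfS⟩
end

section
/- Let γ : ℝ → GL(n, ℝ) be a smooth (differentiable) curve of invertible matrices satisfying the second-order ODE γ'' = γ' γ⁻¹ γ'. If γ(0) = γ₀ and γ'(0) = ε₀, then γ(t) = γ₀ · exp(t · γ₀⁻¹ ε₀) for all t. -/
/-!
Differentiating `γ⁻¹ γ'` gives `γ⁻¹ (γ'' - γ' γ⁻¹ γ')`, so along a solution the velocity `γ⁻¹ γ'`
read in the left-invariant frame is the constant `A = γ₀⁻¹ ε₀`. The curve then solves the linear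
equation `γ' = γ A`, and `γ(t) exp(-tA)` has zero derivative, hence equals `γ₀`.
-/

open Matrix NormedSpace Ring

section RingInverse

variable {𝕜 R : Type*} [NontriviallyNormedField 𝕜] [NormedRing R] [NormedAlgebra 𝕜 R]
  [HasSummableGeomSeries R] {f : 𝕜 → R} {f' : R} {x : 𝕜}

theorem HasDerivAt.ringInverse (hf : HasDerivAt f f' x) (hx : IsUnit (f x)) :
    HasDerivAt (fun y => (f y)⁻¹ʳ) (-((f x)⁻¹ʳ * f' * (f x)⁻¹ʳ)) x := by
  obtain ⟨u, hu⟩ := hx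
  have h := (hu ▸ hasFDerivAt_ringInverse (𝕜 := 𝕜) u).comp_hasDerivAt x hf
  simpa [← hu, Function.comp_def] using h

end RingInverse

section Geodesic

variable {𝔸 : Type*} [NormedRing 𝔸] [NormedAlgebra ℝ 𝔸] [CompleteSpace 𝔸]

theorem eq_mul_exp_smul_of_hasDerivAt_mul_const {γ : ℝ → 𝔸} {A : 𝔸}
    (hγ : ∀ t, HasDerivAt γ (γ t * A) t) (t : ℝ) : γ t = γ 0 * exp (t • A) := by
  have hderiv : ∀ s, HasDerivAt (fun s => γ s * exp (s • -A)) 0 s := fun s => by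
    convert (hγ s).fun_mul (hasDerivAt_exp_smul_const' (-A) s) using 1
    noncomm_ring
  have hconst : γ t * exp (t • -A) = γ 0 := by
    simpa using is_const_of_deriv_eq_zero (fun s => (hderiv s).differentiableAt)
      (fun s => (hderiv s).deriv) t 0
  let := NormedAlgebra.restrictScalars ℚ ℝ 𝔸
  have hcomm : Commute (t • -A) (t • A) := ((Commute.refl A).neg_left.smul_left t).smul_right t
  calc γ t = γ t * exp (t • -A) * exp (t • A) := by
        rw [mul_assoc, ← exp_add_of_commute hcomm, smul_neg, neg_add_cancel, exp_zero, mul_one]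
    _ = γ 0 * exp (t • A) := by rw [hconst]

variable {γ γ' γ'' : ℝ → 𝔸} (hu : ∀ t, IsUnit (γ t)) (hγ : ∀ t, HasDerivAt γ (γ' t) t)
  (hγ' : ∀ t, HasDerivAt γ' (γ'' t) t) (hode : ∀ t, γ'' t = γ' t * (γ t)⁻¹ʳ * γ' t)
include hu hγ hγ' hode

theorem inverse_mul_deriv_eq_of_geodesic (s t : ℝ) :
    (γ s)⁻¹ʳ * γ' s = (γ t)⁻¹ʳ * γ' t := by
  have hderiv : ∀ r, HasDerivAt (fun r => (γ r)⁻¹ʳ * γ' r) 0 r := fun r => by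
    convert ((hγ r).ringInverse (hu r)).fun_mul (hγ' r) using 1
    rw [hode r]
    noncomm_ring
  exact is_const_of_deriv_eq_zero (fun r => (hderiv r).differentiableAt)
    (fun r => (hderiv r).deriv) s t

theorem geodesic_eq_mul_exp (t : ℝ) : γ t = γ 0 * exp (t • ((γ 0)⁻¹ʳ * γ' 0)) := by
  refine eq_mul_exp_smul_of_hasDerivAt_mul_const (fun s => ?_) t
  rw [← inverse_mul_deriv_eq_of_geodesic hu hγ hγ' hode s 0,
    Ring.mul_inverse_cancel_left _ _ (hu s)]
  exact hγ s

end Geodesic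

attribute [local instance] Matrix.normedAddCommGroup Matrix.normedSpace

/-- A smooth curve of invertible matrices solving the geodesic ODE
`γ'' = γ' γ⁻¹ γ'` with initial data `γ(0) = γ₀`, `γ'(0) = ε₀` is given by
`γ(t) = γ₀ · exp (t • γ₀⁻¹ ε₀)`. -/
theorem geodesic_ode_solution (n : ℕ)
    (γ γ' γ'' : ℝ → Matrix (Fin n) (Fin n) ℝ)
    (γ₀ ε₀ : Matrix (Fin n) (Fin n) ℝ)
    (hinv : ∀ t, IsUnit (γ t))
    (hd : ∀ t, HasDerivAt γ (γ' t) t)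
    (hdd : ∀ t, HasDerivAt γ' (γ'' t) t)
    (hode : ∀ t, γ'' t = γ' t * (γ t)⁻¹ * γ' t)
    (h0 : γ 0 = γ₀) (h0' : γ' 0 = ε₀) :
    ∀ t, γ t = γ₀ * NormedSpace.exp (t • (γ₀⁻¹ * ε₀)) := by
  intro t
  -- `HasDerivAt` and `exp` only see the topology, which the sup norm shares definitionally with
  -- the submultiplicative `L∞` operator norm.
  let : NormedRing (Matrix (Fin n) (Fin n) ℝ) := Matrix.linftyOpNormedRing
  let : NormedAlgebra ℝ (Matrix (Fin n) (Fin n) ℝ) := Matrix.linftyOpNormedAlgebra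
  simp only [nonsing_inv_eq_ringInverse] at hode ⊢
  rw [← h0, ← h0']
  exact @geodesic_eq_mul_exp _ _ _ (FiniteDimensional.complete ℝ _) _ _ _ hinv hd hdd hode t
end

section
/- Let γ : ℝ → GL(n,ℝ) be a differentiable curve of symmetric positive-definite matrices, and ε¹, ε² differentiable curves of symmetric matrices. Define D_t ε := ε' - (1/2)(γ' γ⁻¹ ε + ε γ⁻¹ γ'). Then d/dt [tr(γ⁻¹ ε¹ γ⁻¹ ε²)] = tr(γ⁻¹ (D_t ε¹) γ⁻¹ ε²) + tr(γ⁻¹ ε¹ γ⁻¹ (D_t ε²)). (Pointwise compatibility of the Rougée covariant derivative with the Rougée metric.) -/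
open Matrix

attribute [local instance] Matrix.normedAddCommGroup Matrix.normedSpace

/-!
By the product rule and `(γ⁻¹)' = -γ⁻¹ γ' γ⁻¹`, the derivative of `tr (γ⁻¹ ε¹ γ⁻¹ ε²)` is
`tr (γ⁻¹ ε¹' γ⁻¹ ε²) + tr (γ⁻¹ ε¹ γ⁻¹ ε²')` minus the two terms `tr (γ⁻¹ γ' γ⁻¹ ε¹ γ⁻¹ ε²)` and
`tr (γ⁻¹ ε¹ γ⁻¹ γ' γ⁻¹ ε²)`. The four correction terms of `D_t` each contribute half of one of
these two: two of them by associativity alone, the other two after a cyclic permutation under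
the trace.
-/

open Filter Topology

section MatrixCurves

variable {𝕜 m : Type*} [NontriviallyNormedField 𝕜] [Fintype m]
  {A B : 𝕜 → Matrix m m 𝕜} {A' B' : Matrix m m 𝕜} {t : 𝕜}

theorem HasDerivAt.matrix_mul [CompleteSpace 𝕜] (hA : HasDerivAt A A' t)
    (hB : HasDerivAt B B' t) : HasDerivAt (fun s => A s * B s) (A' * B t + A t * B') t := by
  rw [add_comm]
  exact (LinearMap.mul 𝕜 (Matrix m m 𝕜)).toContinuousBilinearMap.hasDerivAt_of_bilinear
    (fun _ => hA) (fun _ => hB)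

theorem HasDerivAt.matrix_trace [CompleteSpace 𝕜] (hA : HasDerivAt A A' t) :
    HasDerivAt (fun s => (A s).trace) A'.trace t :=
  (traceLinearMap m 𝕜 𝕜).toContinuousLinearMap.hasFDerivAt.comp_hasDerivAt t hA

theorem HasDerivAt.matrix_inv [DecidableEq m] (hA : HasDerivAt A A' t) (hdet : IsUnit (A t).det) :
    HasDerivAt (fun s => (A s)⁻¹) (-((A t)⁻¹ * A' * (A t)⁻¹)) t := by
  have hinv : Tendsto (fun s => (A s)⁻¹) (𝓝[≠] t) (𝓝 (A t)⁻¹) :=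
    ((continuousAt_matrix_inv _ (NormedRing.inverse_continuousAt hdet.unit)).comp
      hA.continuousAt).mono_left nhdsWithin_le_nhds
  -- restated so that `𝓝 A'` uses the product topology of `Matrix`, for which `Tendsto.mul` applies
  have hslope : Tendsto (slope A t) (𝓝[≠] t) (𝓝 A') := hA.tendsto_slope
  have hunit : ∀ᶠ s in 𝓝[≠] t, IsUnit (A s).det := eventually_nhdsWithin_of_eventually_nhds <|
    ((continuous_id.matrix_det.continuousAt.comp hA.continuousAt).eventually_ne
      hdet.ne_zero).mono fun s hs => hs.isUnit
  have hslope_inv : ∀ᶠ s in 𝓝[≠] t,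
      -((A s)⁻¹ * slope A t s * (A t)⁻¹) = slope (fun s => (A s)⁻¹) t s := by
    filter_upwards [hunit] with s hs
    have hAs_iff : IsUnit (A s) ↔ IsUnit (A t) := by
      simp only [isUnit_iff_isUnit_det, hs, hdet]
    rw [slope_def_module, slope_def_module, Matrix.inv_sub_inv hAs_iff, ← neg_sub (A s),
      Matrix.mul_neg, Matrix.neg_mul, Matrix.mul_smul, Matrix.smul_mul, smul_neg]
  exact hasDerivAt_iff_tendsto_slope.2 <|
    (((hinv.mul hslope).mul_const _).neg).congr' hslope_inv

end MatrixCurves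

section Rougee

variable {m : Type*} [Fintype m] [DecidableEq m]

noncomputable def rougeeMetric (γ : Matrix m m ℝ) : Matrix m m ℝ →ₗ[ℝ] Matrix m m ℝ →ₗ[ℝ] ℝ :=
  LinearMap.mk₂ ℝ (fun a b => (γ⁻¹ * a * γ⁻¹ * b).trace)
    (fun _ _ _ => by simp only [Matrix.mul_add, Matrix.add_mul, trace_add])
    (fun _ _ _ => by simp only [Matrix.mul_smul, Matrix.smul_mul, trace_smul])
    (fun _ _ _ => by simp only [Matrix.mul_add, trace_add])
    (fun _ _ _ => by simp only [Matrix.mul_smul, trace_smul])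

noncomputable def rougeeCovDeriv (γ γ' ε ε' : Matrix m m ℝ) : Matrix m m ℝ :=
  ε' - (1 / 2 : ℝ) • (γ' * γ⁻¹ * ε + ε * γ⁻¹ * γ')

lemma rougeeMetric_apply (γ a b : Matrix m m ℝ) :
    rougeeMetric γ a b = (γ⁻¹ * a * γ⁻¹ * b).trace := rfl

lemma rougeeMetric_mul_inv_mul_left (γ a b c : Matrix m m ℝ) :
    rougeeMetric γ (a * γ⁻¹ * c) b = rougeeMetric γ a (c * γ⁻¹ * b) := by
  simp only [rougeeMetric_apply, Matrix.mul_assoc]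

lemma rougeeMetric_mul_inv_mul_right (γ a b c : Matrix m m ℝ) :
    rougeeMetric γ a (b * γ⁻¹ * c) = rougeeMetric γ (c * γ⁻¹ * a) b := by
  rw [rougeeMetric_apply, rougeeMetric_apply,
    show γ⁻¹ * a * γ⁻¹ * (b * γ⁻¹ * c) = (γ⁻¹ * a * γ⁻¹ * b) * (γ⁻¹ * c) by
      simp only [Matrix.mul_assoc],
    trace_mul_comm]
  simp only [Matrix.mul_assoc]

lemma rougeeMetric_covDeriv_add (γ γ' a a' b b' : Matrix m m ℝ) :
    rougeeMetric γ (rougeeCovDeriv γ γ' a a') b + rougeeMetric γ a (rougeeCovDeriv γ γ' b b') =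
      rougeeMetric γ a' b + rougeeMetric γ a b'
        - rougeeMetric γ (γ' * γ⁻¹ * a) b - rougeeMetric γ a (γ' * γ⁻¹ * b) := by
  simp only [rougeeCovDeriv, map_sub, map_add, map_smul, LinearMap.sub_apply,
    LinearMap.add_apply, LinearMap.smul_apply, smul_eq_mul]
  rw [rougeeMetric_mul_inv_mul_left γ a b γ', rougeeMetric_mul_inv_mul_right γ a b γ']
  ring

theorem HasDerivAt.rougeeMetric {γ a b : ℝ → Matrix m m ℝ} {γ' a' b' : Matrix m m ℝ} {t : ℝ}
    (hγ : HasDerivAt γ γ' t) (hdet : IsUnit (γ t).det) (ha : HasDerivAt a a' t)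
    (hb : HasDerivAt b b' t) :
    HasDerivAt (fun s => rougeeMetric (γ s) (a s) (b s))
      (rougeeMetric (γ t) a' (b t) + rougeeMetric (γ t) (a t) b'
        - rougeeMetric (γ t) (γ' * (γ t)⁻¹ * a t) (b t)
        - rougeeMetric (γ t) (a t) (γ' * (γ t)⁻¹ * b t)) t := by
  have hinv := hγ.matrix_inv hdet
  refine (((hinv.matrix_mul ha).matrix_mul hinv).matrix_mul hb).matrix_trace.congr_deriv ?_
  simp only [rougeeMetric_apply, Matrix.add_mul, Matrix.neg_mul, Matrix.mul_neg,
    trace_add, trace_neg, Matrix.mul_assoc]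
  ring

end Rougee

theorem rougee_metric_compatibility_general (n : ℕ)
    (γ γ' ε₁ ε₁' ε₂ ε₂' : ℝ → Matrix (Fin n) (Fin n) ℝ)
    (hγpd : ∀ t, (γ t).PosDef)
    (hγ : ∀ t, HasDerivAt γ (γ' t) t)
    (hε₁ : ∀ t, HasDerivAt ε₁ (ε₁' t) t)
    (hε₂ : ∀ t, HasDerivAt ε₂ (ε₂' t) t) :
    ∀ t, HasDerivAt (fun s => ((γ s)⁻¹ * ε₁ s * (γ s)⁻¹ * ε₂ s).trace)
      (((γ t)⁻¹ * (ε₁' t - (1 / 2 : ℝ) • (γ' t * (γ t)⁻¹ * ε₁ t + ε₁ t * (γ t)⁻¹ * γ' t))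
          * (γ t)⁻¹ * ε₂ t).trace
        + ((γ t)⁻¹ * ε₁ t * (γ t)⁻¹
          * (ε₂' t - (1 / 2 : ℝ) • (γ' t * (γ t)⁻¹ * ε₂ t + ε₂ t * (γ t)⁻¹ * γ' t))).trace)
      t := by
  intro t
  have h := (hγ t).rougeeMetric (hγpd t).det_pos.ne'.isUnit (hε₁ t) (hε₂ t)
  rwa [← rougeeMetric_covDeriv_add] at h

/-- Pointwise compatibility of the Rougée covariant derivative
`D_t ε = ε' - (1/2)(γ' γ⁻¹ ε + ε γ⁻¹ γ')` with the Rougée metric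
`⟨ε¹, ε²⟩_γ = tr (γ⁻¹ ε¹ γ⁻¹ ε²)`. -/
theorem rougee_metric_compatibility (n : ℕ)
    (γ γ' ε₁ ε₁' ε₂ ε₂' : ℝ → Matrix (Fin n) (Fin n) ℝ)
    (hγpd : ∀ t, (γ t).PosDef) (hγs : ∀ t, (γ t).IsSymm)
    (hε₁s : ∀ t, (ε₁ t).IsSymm) (hε₂s : ∀ t, (ε₂ t).IsSymm)
    (hγ : ∀ t, HasDerivAt γ (γ' t) t)
    (hε₁ : ∀ t, HasDerivAt ε₁ (ε₁' t) t)
    (hε₂ : ∀ t, HasDerivAt ε₂ (ε₂' t) t) :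
    ∀ t, HasDerivAt (fun s => ((γ s)⁻¹ * ε₁ s * (γ s)⁻¹ * ε₂ s).trace)
      (((γ t)⁻¹ * (ε₁' t - (1 / 2 : ℝ) • (γ' t * (γ t)⁻¹ * ε₁ t + ε₁ t * (γ t)⁻¹ * γ' t))
          * (γ t)⁻¹ * ε₂ t).trace
        + ((γ t)⁻¹ * ε₁ t * (γ t)⁻¹
          * (ε₂' t - (1 / 2 : ℝ) • (γ' t * (γ t)⁻¹ * ε₂ t + ε₂ t * (γ t)⁻¹ * γ' t))).trace)
      t :=
  rougee_metric_compatibility_general n γ γ' ε₁ ε₁' ε₂ ε₂' hγpd hγ hε₁ hε₂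
end

section
/- Let θ, ε : ℝ → Mat(n,ℝ) be differentiable curves of matrices, γ a differentiable curve of invertible matrices, and define D_t ε := ε' - (1/2)(γ' γ⁻¹ ε + ε γ⁻¹ γ') and D_t θ := θ' + (1/2)(θ γ' γ⁻¹ + γ⁻¹ γ' θ). Then the Leibniz rule holds: tr((D_t θ)ᵀ ε) + tr(θᵀ (D_t ε)) = d/dt [tr(θᵀ ε)], when θ, ε, γ, γ' are symmetric. -/
open Matrix

attribute [local instance] Matrix.normedAddCommGroup Matrix.normedSpace

/-!
The product rule gives `d/dt tr(θᵀ ε) = tr(θ'ᵀ ε) + tr(θᵀ ε')`, so the Jaumann correction terms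
must cancel. Put `M = γ' γ⁻¹`; symmetry of `γ` and `γ'` gives `Mᵀ = γ⁻¹ γ'`, so the corrections
are `θ ↦ θ M + Mᵀ θ` and `ε ↦ M ε + ε Mᵀ`, and by cyclicity of the trace these two maps are
adjoint for the pairing `(θ, ε) ↦ tr(θᵀ ε)`.
-/

theorem Matrix.trace_transpose_mul_add_eq_trace_mul_add {n R : Type*} [Fintype n]
    [CommSemiring R] (A B M : Matrix n n R) :
    ((A * M + Mᵀ * A)ᵀ * B).trace = (Aᵀ * (M * B + B * Mᵀ)).trace := by
  simp only [transpose_add, transpose_mul, transpose_transpose, add_mul, mul_add, trace_add,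
    Matrix.mul_assoc]
  rw [trace_mul_comm Mᵀ, Matrix.mul_assoc, add_comm]

theorem HasDerivAt.trace_transpose_mul {𝕜 m n : Type*} [NontriviallyNormedField 𝕜]
    [CompleteSpace 𝕜] [Fintype m] [Fintype n] {A B : 𝕜 → Matrix m n 𝕜} {A' B' : Matrix m n 𝕜}
    {t : 𝕜} (hA : HasDerivAt A A' t) (hB : HasDerivAt B B' t) :
    HasDerivAt (fun s => ((A s)ᵀ * B s).trace) ((A'ᵀ * B t).trace + ((A t)ᵀ * B').trace) t := by
  let pairing : Matrix m n 𝕜 →L[𝕜] Matrix m n 𝕜 →L[𝕜] 𝕜 :=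
    (LinearMap.toContinuousLinearMap.toLinearMap ∘ₗ
      LinearMap.mk₂ 𝕜 (fun X Y : Matrix m n 𝕜 => (Xᵀ * Y).trace)
        (by simp [Matrix.add_mul]) (by simp) (by simp [Matrix.mul_add]) (by simp)
      ).toContinuousLinearMap
  exact (pairing.hasDerivAt_of_bilinear (fun _ => hA) (fun _ => hB)).congr_deriv (add_comm _ _)

theorem jaumann_leibniz_rule_general (n : ℕ)
    (γ γ' θ θ' ε ε' : ℝ → Matrix (Fin n) (Fin n) ℝ)
    (hθ : ∀ t, HasDerivAt θ (θ' t) t)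
    (hε : ∀ t, HasDerivAt ε (ε' t) t)
    (hγs : ∀ t, (γ t).IsSymm) (hγ's : ∀ t, (γ' t).IsSymm) :
    ∀ t, HasDerivAt (fun s => ((θ s)ᵀ * ε s).trace)
      (((θ' t + (1 / 2 : ℝ) • (θ t * γ' t * (γ t)⁻¹ + (γ t)⁻¹ * γ' t * θ t))ᵀ * ε t).trace
        + ((θ t)ᵀ *
          (ε' t - (1 / 2 : ℝ) • (γ' t * (γ t)⁻¹ * ε t + ε t * (γ t)⁻¹ * γ' t))).trace)
      t := by
  intro t
  have hspin : (γ' t * (γ t)⁻¹)ᵀ = (γ t)⁻¹ * γ' t := by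
    rw [transpose_mul, transpose_nonsing_inv, (hγs t).eq, (hγ's t).eq]
  have hadjoint := trace_transpose_mul_add_eq_trace_mul_add (θ t) (ε t) (γ' t * (γ t)⁻¹)
  simp only [hspin, ← Matrix.mul_assoc] at hadjoint
  refine ((hθ t).trace_transpose_mul (hε t)).congr_deriv ?_
  simp only [transpose_add, transpose_smul, Matrix.add_mul, Matrix.mul_add, Matrix.mul_sub,
    Matrix.smul_mul, Matrix.mul_smul, trace_add, trace_sub, trace_smul, smul_eq_mul] at hadjoint ⊢
  linear_combination (-1 / 2 : ℝ) * hadjoint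

/-- Pointwise Leibniz rule for the Zaremba–Jaumann covariant derivative:
with `D_t ε = ε' - (1/2)(γ' γ⁻¹ ε + ε γ⁻¹ γ')` and
`D_t θ = θ' + (1/2)(θ γ' γ⁻¹ + γ⁻¹ γ' θ)`, one has
`tr((D_t θ)ᵀ ε) + tr(θᵀ (D_t ε)) = d/dt tr(θᵀ ε)`. -/
theorem jaumann_leibniz_rule (n : ℕ)
    (γ γ' θ θ' ε ε' : ℝ → Matrix (Fin n) (Fin n) ℝ)
    (hγinv : ∀ t, IsUnit (γ t))
    (hγ : ∀ t, HasDerivAt γ (γ' t) t)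
    (hθ : ∀ t, HasDerivAt θ (θ' t) t)
    (hε : ∀ t, HasDerivAt ε (ε' t) t)
    (hγs : ∀ t, (γ t).IsSymm) (hγ's : ∀ t, (γ' t).IsSymm)
    (hθs : ∀ t, (θ t).IsSymm) (hεs : ∀ t, (ε t).IsSymm) :
    ∀ t, HasDerivAt (fun s => ((θ s)ᵀ * ε s).trace)
      (((θ' t + (1 / 2 : ℝ) • (θ t * γ' t * (γ t)⁻¹ + (γ t)⁻¹ * γ' t * θ t))ᵀ * ε t).trace
        + ((θ t)ᵀ *
          (ε' t - (1 / 2 : ℝ) • (γ' t * (γ t)⁻¹ * ε t + ε t * (γ t)⁻¹ * γ' t))).trace)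
      t :=
  jaumann_leibniz_rule_general n γ γ' θ θ' ε ε' hθ hε hγs hγ's
end

section
/- Let γ, δ be symmetric n×n real matrices with γ positive-definite. Then there exists a differentiable curve F : ℝ → GL(n,ℝ) such that F(0)ᵀ F(0) = γ and (d/dt)|_{t=0} (F(t)ᵀ F(t)) = δ. -/
open Matrix

open NormedSpace in
private lemma exp_entry_hasDerivAt {n : ℕ} (A : Matrix (Fin n) (Fin n) ℝ) (t : ℝ)
    (i j : Fin n) :
    HasDerivAt (fun s : ℝ => exp (s • A) i j) ((exp (t • A) * A) i j) t := by
  letI : SeminormedRing (Matrix (Fin n) (Fin n) ℝ) := Matrix.linftyOpSemiNormedRing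
  letI : NormedRing (Matrix (Fin n) (Fin n) ℝ) := Matrix.linftyOpNormedRing
  letI : NormedAlgebra ℝ (Matrix (Fin n) (Fin n) ℝ) := Matrix.linftyOpNormedAlgebra
  have h := hasDerivAt_exp_smul_const (𝕂 := ℝ) A t
  let L : Matrix (Fin n) (Fin n) ℝ →ₗ[ℝ] ℝ := Matrix.entryLinearMap ℝ ℝ i j
  exact (L.toContinuousLinearMap.hasFDerivAt (x := exp (t • A))).comp_hasDerivAt t h

attribute [local instance] Matrix.normedAddCommGroup Matrix.normedSpace

open NormedSpace MatrixOrder in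
/-- Pointwise surjectivity of the one-jet of the Nash map (with `q = I`): for any
symmetric positive-definite `γ` and symmetric `δ`, there is a differentiable curve
`F(t)` of invertible matrices with `F(0)ᵀ F(0) = γ` and `(d/dt)|₀ (F(t)ᵀ F(t)) = δ`. -/
theorem nash_jet_surjective (n : ℕ)
    (γ δ : Matrix (Fin n) (Fin n) ℝ) (hγ : γ.PosDef) (hδ : δ.IsSymm) :
    ∃ F F' : ℝ → Matrix (Fin n) (Fin n) ℝ,
      (∀ t, IsUnit (F t)) ∧
      (∀ t, HasDerivAt F (F' t) t) ∧
      (F 0)ᵀ * F 0 = γ ∧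
      HasDerivAt (fun t => (F t)ᵀ * F t) δ 0 := by
  classical
  set U := CFC.sqrt γ with hUdef
  have hUsymm : Uᵀ = U := by
    have h := (CFC.sqrt_nonneg γ).posSemidef.isHermitian
    rwa [Matrix.IsHermitian, conjTranspose_eq_transpose_of_trivial] at h
  have hUU : U * U = γ := CFC.sqrt_mul_sqrt_self γ hγ.posSemidef.nonneg
  have hγsymm : γᵀ = γ := by
    have h := hγ.isHermitian
    rwa [Matrix.IsHermitian, conjTranspose_eq_transpose_of_trivial] at h
  have hγdet : IsUnit γ.det := isUnit_iff_ne_zero.2 hγ.det_pos.ne'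
  set A := (2⁻¹ : ℝ) • (γ⁻¹ * δ) with hAdef
  set F : ℝ → Matrix (Fin n) (Fin n) ℝ := fun t => U * exp (t • A) with hF
  set F' : ℝ → Matrix (Fin n) (Fin n) ℝ := fun t => U * (exp (t • A) * A) with hF'
  have hUunit : IsUnit U := by
    rw [Matrix.isUnit_iff_isUnit_det, isUnit_iff_ne_zero]
    intro h
    have : γ.det = 0 := by rw [← hUU, Matrix.det_mul, h, mul_zero]
    exact hγ.det_pos.ne' this
  have hEntry : ∀ (t : ℝ) (i j : Fin n),
      HasDerivAt (fun s : ℝ => F s i j) (F' t i j) t := by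
    intro t i j
    simp only [hF, hF', Matrix.mul_apply]
    exact HasDerivAt.fun_sum fun k _ => ((exp_entry_hasDerivAt A t k j).const_mul (U i k))
  have hDeriv : ∀ t, HasDerivAt F (F' t) t := by
    intro t
    exact hasDerivAt_pi.2 fun i => hasDerivAt_pi.2 fun j => hEntry t i j
  have hF0 : F 0 = U := by simp [hF]
  have hF'0 : F' 0 = U * A := by simp [hF']
  refine ⟨F, F', fun t => hUunit.mul (Matrix.isUnit_exp _), hDeriv, ?_, ?_⟩
  · rw [hF0, hUsymm, hUU]
  · -- derivative of FᵀF at 0 is δ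
    have key : (U * A)ᵀ * U + Uᵀ * (U * A) = δ := by
      have hγinvT : (γ⁻¹)ᵀ = γ⁻¹ := by rw [Matrix.transpose_nonsing_inv, hγsymm]
      have hAT : Aᵀ = (2⁻¹ : ℝ) • (δ * γ⁻¹) := by
        rw [hAdef, Matrix.transpose_smul, Matrix.transpose_mul, hγinvT, hδ.eq]
      calc (U * A)ᵀ * U + Uᵀ * (U * A)
          = Aᵀ * (Uᵀ * U) + Uᵀ * U * A := by
            rw [Matrix.transpose_mul]; noncomm_ring
        _ = Aᵀ * γ + γ * A := by rw [hUsymm, hUU]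
        _ = (2⁻¹ : ℝ) • (δ * (γ⁻¹ * γ)) + (2⁻¹ : ℝ) • (γ * γ⁻¹ * δ) := by
            rw [hAT, hAdef]; simp [Matrix.smul_mul, Matrix.mul_smul, Matrix.mul_assoc]
        _ = (2⁻¹ : ℝ) • δ + (2⁻¹ : ℝ) • δ := by
            rw [Matrix.nonsing_inv_mul γ hγdet, Matrix.mul_nonsing_inv γ hγdet,
              Matrix.mul_one, Matrix.one_mul]
        _ = δ := by rw [← add_smul]; norm_num
    refine hasDerivAt_pi.2 fun i => hasDerivAt_pi.2 fun j => ?_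
    have h : HasDerivAt (fun t => ∑ k, F t k i * F t k j)
        (∑ k, ((U * A) k i * U k j + U k i * (U * A) k j)) 0 := by
      refine HasDerivAt.fun_sum fun k _ => ?_
      have h1 := hEntry 0 k i
      have h2 := hEntry 0 k j
      rw [hF'0] at h1 h2
      have := h1.mul h2
      rwa [hF0] at this
    have heq : (∑ k, ((U * A) k i * U k j + U k i * (U * A) k j)) = δ i j := by
      have := congrFun (congrFun key i) j
      simp only [Matrix.add_apply, Matrix.mul_apply, Matrix.transpose_apply,
        Finset.sum_add_distrib] at this ⊢
      rw [← this]
    rw [heq] at h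
    exact h
end
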